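/- Let A be a Hermitian n×n matrix, S : C^{n×n} → C^{n×n} a positivity-preserving linear map, and M : ℍ → C^{n×n} the solution of -M(z)⁻¹ = z·I - A + S[M(z)] with Im M(z) positive definite, admitting the representation M(z) = ∫_ℝ (τ - z)⁻¹ V(dτ) with V(ℝ) = I. Suppose z ∈ ℍ satisfies dist(z, spec A) > 2‖S‖^{1/2} and ‖M(z)‖ ≤ 2/dist(z, spec A), where ‖S‖ is the operator norm of S with respect to the operator norm on matrices. Then ‖Im M(z)‖ ≤ 4·Im z / (dist(z, spec A)² - 4‖S‖). -/

import Mathlib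

/-! Write `N = z - A + S[M]`, so that `N M = -1` and hence `M - M* = M* (N - N*) M`.
A positivity-preserving map commutes with the adjoint (a self-adjoint `a` is the difference of
the positive elements `a + ‖a‖` and `‖a‖`), so taking imaginary parts gives
`Im M = M* (Im z + S[Im M]) M`. Hence `‖Im M‖ ≤ ‖M‖² (Im z + ‖S‖ ‖Im M‖)`, and with
`‖M‖ ≤ 2/d`, `d = dist(z, spec A)`, the condition `d² > 4‖S‖` lets one solve for `‖Im M‖`. -/

open MeasureTheory

/-- Bounded operators on the Euclidean space `ℂⁿ` (identified with `n×n` complex matrices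
with the operator norm). -/
abbrev Op (n : ℕ) := EuclideanSpace ℂ (Fin n) →L[ℂ] EuclideanSpace ℂ (Fin n)

/-- The imaginary part `(T - T*)/(2i)` of an operator. -/
noncomputable def imOp {n : ℕ} (T : Op n) : Op n :=
  (2 * Complex.I)⁻¹ • (T - ContinuousLinearMap.adjoint T)

open ComplexStarModule

section PositivityPreserving

variable {A B : Type*} [CStarAlgebra A] [PartialOrder A] [StarOrderedRing A]
  [NonUnitalRing B] [StarRing B] [PartialOrder B] [StarOrderedRing B] [Module ℂ B]

lemma IsSelfAdjoint.map_of_map_nonneg (f : A →ₗ[ℂ] B) (hf : ∀ a, 0 ≤ a → 0 ≤ f a) {a : A}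
    (ha : IsSelfAdjoint a) : IsSelfAdjoint (f a) := by
  have hc : 0 ≤ algebraMap ℝ A ‖a‖ := algebraMap_nonneg A (norm_nonneg a)
  have hac : 0 ≤ a + algebraMap ℝ A ‖a‖ :=
    neg_le_iff_add_nonneg.mp ha.neg_algebraMap_norm_le_self
  simpa using (IsSelfAdjoint.of_nonneg (hf _ hac)).sub (IsSelfAdjoint.of_nonneg (hf _ hc))

lemma map_star_of_map_nonneg [StarModule ℂ B] (f : A →ₗ[ℂ] B) (hf : ∀ a, 0 ≤ a → 0 ≤ f a)
    (a : A) : f (star a) = star (f a) := by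
  have hre := (ℜ a).2.map_of_map_nonneg f hf
  have him := (ℑ a).2.map_of_map_nonneg f hf
  conv_lhs => rw [← realPart_add_I_smul_imaginaryPart a]
  conv_rhs => rw [← realPart_add_I_smul_imaginaryPart a]
  simp [hre.star_eq, him.star_eq]

end PositivityPreserving

lemma sub_star_eq_star_mul_sub_star_mul_of_mul_eq_neg_one {R : Type*} [Ring R] [StarRing R]
    {N M : R} (h : N * M = -1) : M - star M = star M * (N - star N) * M := by
  have h' : star M * star N = -1 := by rw [← star_mul, h, star_neg, star_one]
  calc M - star M = star M * (N * M) - star M * star N * M := by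
        rw [h, h']; noncomm_ring
    _ = star M * (N - star N) * M := by noncomm_ring

lemma norm_star_mul_mul_le {R : Type*} [NormedRing R] [StarRing R] [NormedStarGroup R]
    (m c : R) : ‖star m * c * m‖ ≤ ‖m‖ ^ 2 * ‖c‖ :=
  calc ‖star m * c * m‖ ≤ ‖star m‖ * ‖c‖ * ‖m‖ := norm_mul₃_le
    _ = ‖m‖ ^ 2 * ‖c‖ := by rw [norm_star]; ring

section ImaginaryPart

variable {n : ℕ}

lemma imOp_eq_star_mul_imOp_mul {N T : Op n} (h : N * T = -1) :
    imOp T = star T * imOp N * T := by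
  simp only [imOp, ← ContinuousLinearMap.star_eq_adjoint,
    sub_star_eq_star_mul_sub_star_mul_of_mul_eq_neg_one h, mul_smul_comm, smul_mul_assoc]

lemma imOp_smul_one_sub_add (w : ℂ) {A : Op n} (hA : IsSelfAdjoint A) (T : Op n) :
    imOp (w • 1 - A + T) = (w.im : ℂ) • 1 + imOp T := by
  have hw : (2 * Complex.I)⁻¹ * (w - starRingEnd ℂ w) = w.im := by
    rw [Complex.sub_conj]; field_simp; push_cast; ring
  simp only [imOp, ← ContinuousLinearMap.star_eq_adjoint, star_add, star_sub, star_smul,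
    star_one, hA.star_eq, Complex.star_def, ← hw, mul_smul]
  module

lemma imOp_map_of_map_star {S : Op n →L[ℂ] Op n} (hS : ∀ T, S (star T) = star (S T)) (T : Op n) :
    imOp (S T) = S (imOp T) := by
  simp only [imOp, ← ContinuousLinearMap.star_eq_adjoint, ← hS, map_smul, map_sub]

end ImaginaryPart

lemma le_four_mul_div_of_le_sq_mul {x y s m d : ℝ} (hs : 0 ≤ s) (hd : 2 * √s < d) (hm0 : 0 ≤ m)
    (hm : m ≤ 2 / d) (hc : 0 ≤ y + s * x) (hx : x ≤ m ^ 2 * (y + s * x)) :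
    x ≤ 4 * y / (d ^ 2 - 4 * s) := by
  have hd0 : 0 < d := lt_of_le_of_lt (by positivity) hd
  have hsd : 4 * s < d ^ 2 := by nlinarith [Real.sq_sqrt hs, Real.sqrt_nonneg s]
  have hmd : m * d ≤ 2 := (le_div_iff₀ hd0).mp hm
  rw [le_div_iff₀ (by linarith)]
  nlinarith [mul_le_mul_of_nonneg_right hx (sq_nonneg d), mul_nonneg (mul_nonneg hm0 hd0.le) hc,
    mul_le_mul hmd hmd (mul_nonneg hm0 hd0.le) zero_le_two]

theorem stmt_3_general {n : ℕ} (A : Op n) (hA : IsSelfAdjoint A)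
    (S : Op n →L[ℂ] Op n)
    (hS : ∀ T : Op n, T.IsPositive → (S T).IsPositive)
    (M : ℂ → Op n)
    (hDyson : ∀ w : ℂ, 0 < w.im → (w • (1 : Op n) - A + S (M w)) * M w = -1)
    (z : ℂ) (hz : 0 < z.im)
    (hdist : 2 * Real.sqrt ‖S‖ < Metric.infDist z (spectrum ℂ A))
    (hMz : ‖M z‖ ≤ 2 / Metric.infDist z (spectrum ℂ A)) :
    ‖imOp (M z)‖ ≤ 4 * z.im / (Metric.infDist z (spectrum ℂ A) ^ 2 - 4 * ‖S‖) := by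
  have hS_star : ∀ T, S (star T) = star (S T) := map_star_of_map_nonneg S.toLinearMap
    fun T hT ↦ (S T).nonneg_iff_isPositive.mpr (hS T (T.nonneg_iff_isPositive.mp hT))
  set C : Op n := (z.im : ℂ) • 1 + S (imOp (M z))
  have hIm : imOp (M z) = star (M z) * C * M z := by
    have h := imOp_eq_star_mul_imOp_mul (hDyson z hz)
    rwa [imOp_smul_one_sub_add z hA, imOp_map_of_map_star hS_star] at h
  have hC : ‖C‖ ≤ z.im + ‖S‖ * ‖imOp (M z)‖ := by
    refine (norm_add_le _ _).trans (add_le_add ?_ (S.le_opNorm _))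
    rw [norm_smul, Complex.norm_real, Real.norm_of_nonneg hz.le]
    exact mul_le_of_le_one_right hz.le ContinuousLinearMap.norm_id_le
  refine le_four_mul_div_of_le_sq_mul (norm_nonneg S) hdist (norm_nonneg _) hMz (by positivity) ?_
  calc ‖imOp (M z)‖ = ‖star (M z) * C * M z‖ := congrArg norm hIm
    _ ≤ ‖M z‖ ^ 2 * ‖C‖ := norm_star_mul_mul_le (M z) C
    _ ≤ ‖M z‖ ^ 2 * (z.im + ‖S‖ * ‖imOp (M z)‖) := mul_le_mul_of_nonneg_left hC (sq_nonneg _)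

theorem stmt_3 {n : ℕ} (A : Op n) (hA : IsSelfAdjoint A)
    (S : Op n →L[ℂ] Op n)
    (hS : ∀ T : Op n, T.IsPositive → (S T).IsPositive)
    (M : ℂ → Op n)
    (hDyson : ∀ w : ℂ, 0 < w.im → (w • (1 : Op n) - A + S (M w)) * M w = -1)
    (hposdef : ∀ w : ℂ, 0 < w.im → (imOp (M w)).IsPositive ∧
      ∀ x : EuclideanSpace ℂ (Fin n), x ≠ 0 → 0 < (@inner ℂ _ _ x (imOp (M w) x)).re)
    (μ : Measure ℝ) [IsFiniteMeasure μ] (f : ℝ → Op n)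
    (hf : ∀ τ : ℝ, (f τ).IsPositive)
    (hTot : ∫ τ, f τ ∂μ = 1)
    (hRep : ∀ w : ℂ, 0 < w.im → M w = ∫ τ, ((τ : ℂ) - w)⁻¹ • f τ ∂μ)
    (z : ℂ) (hz : 0 < z.im)
    (hdist : 2 * Real.sqrt ‖S‖ < Metric.infDist z (spectrum ℂ A))
    (hMz : ‖M z‖ ≤ 2 / Metric.infDist z (spectrum ℂ A)) :
    ‖imOp (M z)‖ ≤ 4 * z.im / (Metric.infDist z (spectrum ℂ A) ^ 2 - 4 * ‖S‖) :=
  stmt_3_general A hA S hS M hDyson z hz hdist hMz
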